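/- In the group G = ⟨a,b,c | a² = b² = c² = 1, (ac)² = 1, (ab)³ = 1⟩, every element can be represented by a word matching the regular expression [[a]b]([a]cb)*[a][c], i.e., an optional prefix from {ε, b, ab}, followed by finitely many blocks each of the form cb or acb, followed by an optional a, followed by an optional c. -/

import Mathlib

/-- Relations for `G₄ = ⟨a,b,c ∣ a² = b² = c² = 1, (ac)² = 1, (ab)³ = 1⟩`,
with generators `a = of 0`, `b = of 1`, `c = of 2`. -/
def rels4 : Set (FreeGroup (Fin 3)) :=
  {(FreeGroup.of 0) ^ 2, (FreeGroup.of 1) ^ 2, (FreeGroup.of 2) ^ 2,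
   (FreeGroup.of 0 * FreeGroup.of 2) ^ 2, (FreeGroup.of 0 * FreeGroup.of 1) ^ 3}

/-- The generators `a, b, c` of `G₄`. -/
def a : PresentedGroup rels4 := PresentedGroup.of 0
def b : PresentedGroup rels4 := PresentedGroup.of 1
def c : PresentedGroup rels4 := PresentedGroup.of 2

/-!
The elements with such a normal form include `1` and are closed under right multiplication by the
generators, which are involutions, so they exhaust the group. Multiplying by `a` or `c` toggles the
suffix `[a][c]`, as `a` and `c` commute. Multiplying by `b` after a final `c` opens a new block;
otherwise it cancels the `b` ending the last block, or, after a trailing `a`, rewrites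
`[a] c b · a b = [a] c · aba = [a]' c b a` by `bab = aba` and `ac = ca`. With no blocks left, `b`
is absorbed by the prefix, the one nontrivial case being `ab · ab = (ab)⁻¹ = ba`.
-/

theorem Subgroup.induction_mul_right_of_closure_eq_top {G : Type*} [Group G] {s : Set G}
    (hs : Subgroup.closure s = ⊤) (hinv : ∀ x ∈ s, x⁻¹ = x) {p : G → Prop} (one : p 1)
    (mul_right : ∀ g, ∀ x ∈ s, p g → p (g * x)) (g : G) : p g := by
  have hg : g ∈ Subgroup.closure s := hs ▸ Subgroup.mem_top g
  induction hg using Subgroup.closure_induction_right with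
  | one => exact one
  | mul_right g _ x hx ih => exact mul_right g x hx ih
  | mul_inv_cancel g _ x hx ih => rw [hinv x hx]; exact mul_right g x hx ih

section Relations

open PresentedGroup

lemma a_sq : a ^ 2 = 1 := by
  rw [a, of, ← map_pow]; exact one_of_mem (by simp [rels4])

lemma b_sq : b ^ 2 = 1 := by
  rw [b, of, ← map_pow]; exact one_of_mem (by simp [rels4])

lemma c_sq : c ^ 2 = 1 := by
  rw [c, of, ← map_pow]; exact one_of_mem (by simp [rels4])

lemma a_mul_c_sq : (a * c) ^ 2 = 1 := by
  rw [a, c, of, of, ← map_mul, ← map_pow]; exact one_of_mem (by simp [rels4])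

lemma a_mul_b_pow_three : (a * b) ^ 3 = 1 := by
  rw [a, b, of, of, ← map_mul, ← map_pow]; exact one_of_mem (by simp [rels4])

lemma a_mul_a : a * a = 1 := by rw [← sq, a_sq]
lemma b_mul_b : b * b = 1 := by rw [← sq, b_sq]
lemma c_mul_c : c * c = 1 := by rw [← sq, c_sq]

lemma a_inv : a⁻¹ = a := inv_eq_of_mul_eq_one_right a_mul_a
lemma b_inv : b⁻¹ = b := inv_eq_of_mul_eq_one_right b_mul_b
lemma c_inv : c⁻¹ = c := inv_eq_of_mul_eq_one_right c_mul_c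

lemma c_mul_a : c * a = a * c := by
  calc c * a = (a * c)⁻¹ := by rw [mul_inv_rev, a_inv, c_inv]
    _ = a * c := inv_eq_of_mul_eq_one_right (by rw [← sq, a_mul_c_sq])

lemma b_mul_a_mul_b : b * (a * b) = a * (b * a) := by
  have hba : b * a = a * b * (a * b) := by
    calc b * a = (a * b)⁻¹ := by rw [mul_inv_rev, a_inv, b_inv]
      _ = a * b * (a * b) := inv_eq_of_mul_eq_one_right (by rw [← pow_three, a_mul_b_pow_three])
  calc b * (a * b) = b * a * b := (mul_assoc _ _ _).symm
    _ = a * b * (a * b) * b := by rw [hba]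
    _ = a * (b * a) := by simp only [mul_assoc, b_mul_b, mul_one]

lemma a_mul_a_mul (x : PresentedGroup rels4) : a * (a * x) = x := by
  rw [← mul_assoc, a_mul_a, one_mul]

lemma c_mul_a_mul (x : PresentedGroup rels4) : c * (a * x) = a * (c * x) := by
  rw [← mul_assoc, c_mul_a, mul_assoc]

end Relations

def block (s : Bool) : PresentedGroup rels4 := (if s then a else 1) * c * b

def normalForm (pre : Fin 3) (l : List Bool) (d e : Bool) : PresentedGroup rels4 :=
  ![1, b, a * b] pre * (l.map block).prod * (if d then a else 1) * (if e then c else 1)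

def HasNormalForm (g : PresentedGroup rels4) : Prop :=
  ∃ pre l d e, g = normalForm pre l d e

lemma hasNormalForm_one : HasNormalForm 1 := ⟨0, [], false, false, by simp [normalForm]⟩

lemma normalForm_mul_c (pre : Fin 3) (l : List Bool) (d e : Bool) :
    normalForm pre l d e * c = normalForm pre l d !e := by
  cases e <;> simp [normalForm, mul_assoc, c_mul_c]

lemma normalForm_mul_a (pre : Fin 3) (l : List Bool) (d e : Bool) :
    normalForm pre l d e * a = normalForm pre l (!d) e := by
  cases d <;> cases e <;> simp [normalForm, mul_assoc, a_mul_a, a_mul_a_mul, c_mul_a]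

lemma normalForm_true_mul_b (pre : Fin 3) (l : List Bool) (d : Bool) :
    normalForm pre l d true * b = normalForm pre (l ++ [d]) false false := by
  simp [normalForm, block, mul_assoc]

lemma normalForm_concat_false_false_mul_b (pre : Fin 3) (l : List Bool) (s : Bool) :
    normalForm pre (l ++ [s]) false false * b = normalForm pre l s true := by
  cases s <;> simp [normalForm, block, mul_assoc, b_mul_b]

lemma normalForm_concat_true_false_mul_b (pre : Fin 3) (l : List Bool) (s : Bool) :
    normalForm pre (l ++ [s]) true false * b = normalForm pre (l ++ [!s]) true false := by
  cases s <;> simp [normalForm, block, mul_assoc, a_mul_a_mul, c_mul_a_mul, b_mul_a_mul_b]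

lemma hasNormalForm_normalForm_nil_mul_b (pre : Fin 3) (d : Bool) :
    HasNormalForm (normalForm pre [] d false * b) := by
  cases d <;> fin_cases pre
  · exact ⟨1, [], false, false, by simp [normalForm]⟩
  · exact ⟨0, [], false, false, by simp [normalForm, b_mul_b]⟩
  · exact ⟨0, [], true, false, by simp [normalForm, mul_assoc, b_mul_b]⟩
  · exact ⟨2, [], false, false, by simp [normalForm]⟩
  · exact ⟨2, [], true, false, by simp [normalForm, mul_assoc, b_mul_a_mul_b]⟩
  · exact ⟨1, [], true, false, by simp [normalForm, mul_assoc, b_mul_a_mul_b, a_mul_a_mul]⟩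

lemma HasNormalForm.mul_generator {g : PresentedGroup rels4} (hg : HasNormalForm g) (x : Fin 3) :
    HasNormalForm (g * PresentedGroup.of x) := by
  obtain ⟨pre, l, d, e, rfl⟩ := hg
  fin_cases x
  · exact ⟨pre, l, !d, e, normalForm_mul_a pre l d e⟩
  · change HasNormalForm (normalForm pre l d e * b)
    cases e
    · rcases l.eq_nil_or_concat' with rfl | ⟨l, s, rfl⟩
      · exact hasNormalForm_normalForm_nil_mul_b pre d
      · cases d
        · exact ⟨pre, l, s, true, normalForm_concat_false_false_mul_b pre l s⟩
        · exact ⟨pre, l ++ [!s], true, false, normalForm_concat_true_false_mul_b pre l s⟩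
    · exact ⟨pre, l ++ [d], false, false, normalForm_true_mul_b pre l d⟩
  · exact ⟨pre, l, d, !e, normalForm_mul_c pre l d e⟩

/-- Every element of `G₄` is represented by a word matching the regular expression
`[[a]b]([a]cb)*[a][c]`: an optional prefix from `{1, b, ab}`, followed by finitely many
blocks each equal to `cb` or `acb`, followed by an optional `a`, followed by an optional `c`. -/
theorem stmt8 (g : PresentedGroup rels4) :
    ∃ (pre : Fin 3) (l : List Bool) (d e : Bool),
      g = ![1, b, a * b] pre *
          (l.map (fun s => (if s then a else 1) * c * b)).prod *
          (if d then a else 1) * (if e then c else 1) := by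
  refine Subgroup.induction_mul_right_of_closure_eq_top (PresentedGroup.closure_range_of rels4)
    ?_ hasNormalForm_one ?_ g
  · rintro _ ⟨x, rfl⟩
    fin_cases x
    exacts [a_inv, b_inv, c_inv]
  · rintro g _ ⟨x, rfl⟩ hg
    exact hg.mul_generator x
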